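/- (Distinguishability norm contraction.) Let M ⊆ V and M' ⊆ V' be as in the setting below, with induced cones C := (C_M)* ⊆ V, C' := (C_{M'})* ⊆ V' and bases B := C ∩ {v | ⟨e,v⟩ = 1}, B' := C' ∩ {v' | ⟨e',v'⟩ = 1}. Let T : V → V' be a linear map with adjoint T* : V' → V (⟨T*(w'), v⟩ = ⟨w', T(v)⟩). Then for all v₁, v₂ ∈ V with ⟨e,v₁⟩ = ⟨e,v₂⟩: (a) if T*(M') ⊆ M and T*(e') = e, then ‖T v₁ − T v₂‖_(M') ≤ ‖v₁ − v₂‖_(M); (b) if T is base-preserving (T(B) ⊆ B') and M = M̃, then ‖T v₁ − T v₂‖_(M') ≤ ‖v₁ − v₂‖_(M) · tanh(Δ(T)/4), where tanh(∞/4) := 1. -/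

import Mathlib

noncomputable section

variable {V : Type*} [NormedAddCommGroup V] [InnerProductSpace ℝ V]

/-- A proper cone: closed, convex, closed under nonnegative scaling, pointed and solid. -/
def IsProperCone (C : Set V) : Prop :=
  IsClosed C ∧ Convex ℝ C ∧ (∀ (r : ℝ), 0 ≤ r → ∀ x ∈ C, r • x ∈ C) ∧
    (C ∩ (-C) = {0}) ∧ (Submodule.span ℝ C = ⊤)

/-- `sup_C(a/b) := inf {λ : ℝ | λ • b - a ∈ C}`, as an extended real (`⊤` if no such `λ`). -/
def supRatio (C : Set V) (a b : V) : EReal :=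
  sInf ((fun l : ℝ => (l : EReal)) '' {l : ℝ | l • b - a ∈ C})

/-- `inf_C(a/b) := sup {λ : ℝ | a - λ • b ∈ C}`. -/
def infRatio (C : Set V) (a b : V) : EReal :=
  sSup ((fun l : ℝ => (l : EReal)) '' {l : ℝ | a - l • b ∈ C})

/-- Hilbert's projective metric `h_C(a,b) = ln (sup_C(a/b) * sup_C(b/a)) ∈ [0,∞]`. -/
def hilbertDist (C : Set V) (a b : V) : EReal :=
  if supRatio C a b = ⊤ ∨ supRatio C b a = ⊤ then ⊤
  else ((Real.log ((supRatio C a b).toReal * (supRatio C b a).toReal) : ℝ) : EReal)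

/-- The oscillation `osc_C(a/b) = sup_C(a/b) - inf_C(a/b)`. -/
def oscRatio (C : Set V) (a b : V) : EReal :=
  supRatio C a b - infRatio C a b

variable {V' : Type*} [NormedAddCommGroup V'] [InnerProductSpace ℝ V']

/-- The projective diameter `Δ(T)` of a cone-preserving linear map `T`. -/
def projDiam (C : Set V) (C' : Set V') (T : V →ₗ[ℝ] V') : EReal :=
  ⨆ (a : V) (_ : a ∈ C \ {0}) (b : V) (_ : b ∈ C \ {0}), hilbertDist C' (T a) (T b)

/-- `tanh(x/4)`, with the convention `tanh(⊤/4) = 1`. -/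
def tanhQuarter (x : EReal) : ℝ :=
  if x = ⊤ then 1 else Real.tanh (x.toReal / 4)

/-- `tanh(x/2)`, with the convention `tanh(⊤/2) = 1`. -/
def tanhHalf (x : EReal) : ℝ :=
  if x = ⊤ then 1 else Real.tanh (x.toReal / 2)

/-- The dual cone of `C` (identifying `V` with its dual via the inner product). -/
def dualConeSet (C : Set V) : Set V := {w : V | ∀ c ∈ C, 0 ≤ (inner ℝ w c : ℝ)}

/-- The base norm `‖v‖_B` induced by the cone `C` and the functional `⟨e, ·⟩`. -/
def baseNorm (C : Set V) (e : V) (v : V) : ℝ :=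
  sInf {r : ℝ | ∃ cp ∈ C, ∃ cm ∈ C, v = cp - cm ∧ r = (inner ℝ e cp : ℝ) + (inner ℝ e cm : ℝ)}

/-- The negativity `N_B(v)` induced by the cone `C` and the functional `⟨e, ·⟩`. -/
def negativity (C : Set V) (e : V) (v : V) : ℝ :=
  sInf {r : ℝ | ∃ cp ∈ C, ∃ cm ∈ C, v = cp - cm ∧ r = (inner ℝ e cm : ℝ)}

variable {V : Type*} [NormedAddCommGroup V] [InnerProductSpace ℝ V] in
/-- The cone `C_M := ⋃_{λ ≥ 0} λ • M` generated by a set `M`. -/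
def coneOfSet (M : Set V) : Set V := {x : V | ∃ l : ℝ, 0 ≤ l ∧ ∃ E ∈ M, x = l • E}

variable {V : Type*} [NormedAddCommGroup V] [InnerProductSpace ℝ V] in
/-- The distinguishability norm `‖v‖_(M) := sup_{E ∈ M} ⟨2E - e, v⟩`. -/
noncomputable def distNorm (M : Set V) (e : V) (v : V) : ℝ :=
  sSup {r : ℝ | ∃ E ∈ M, r = (inner ℝ (2 • E - e) v : ℝ)}

variable {V : Type*} [NormedAddCommGroup V] [InnerProductSpace ℝ V] in
/-- `M̃ := {E | 0 ≤_{C_M} E ≤_{C_M} e}`. -/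
def mTilde (M : Set V) (e : V) : Set V :=
  {E : V | E ∈ coneOfSet M ∧ e - E ∈ coneOfSet M}

/-!
Part (a) is duality: `⟪2E' - e', T v⟫ = ⟪2 T*E' - e, v⟫` with `T*E' ∈ M`. Here `M` is compact
(an unbounded closed convex set contains a ray, and `e - M ⊆ M` would put the opposite ray in `M`
too), so the supremum defining `‖v‖_(M)` is over a bounded set.

For (b), when `M = M̃` the cone `C_M` is closed and `‖v‖_(M)` dominates the base norm: if `v` were
not in the compact convex set `{a - b | a, b ∈ C, ⟪e, a + b⟫ ≤ ‖v‖_(M)}`, a separating functional,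
suitably rescaled, would give `g` with `e ± g ∈ C* = C_M`, i.e. `(e + g)/2 ∈ M̃`, and
`⟪g, v⟫ > ‖v‖_(M)`. So `v = a - b` with `a, b ∈ C` on the same level `t` and `2t ≤ ‖v‖_(M)`.
Base preservation puts `Ta, Tb` in `C'` on level `t`, and for `E' ∈ M'` the numbers
`p = ⟪E', Ta⟫`, `q = ⟪E', Tb⟫` satisfy `p ≤ λ₁ q` and `t - q ≤ λ₂ (t - p)` with
`λ₁ λ₂ = exp h_{C'}(Ta, Tb)`; AM–GM turns this into `p - q ≤ t tanh(h/4) ≤ t tanh(Δ(T)/4)`.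
-/

open Set Filter Topology
open scoped RealInnerProductSpace

lemma Real.tanh_le_tanh {x y : ℝ} (h : x ≤ y) : Real.tanh x ≤ Real.tanh y := by
  have hI : ∀ z, Real.tanh z ∈ Ioo (-1) 1 := fun z => ⟨Real.neg_one_lt_tanh z, Real.tanh_lt_one z⟩
  rwa [← Real.artanh_le_artanh_iff (hI x) (hI y), Real.artanh_tanh, Real.artanh_tanh]

lemma Real.tanh_log_div_two {r : ℝ} (hr : 0 < r) :
    Real.tanh (Real.log r / 2) = (r - 1) / (r + 1) := by
  have hu : Real.exp (Real.log r / 2) ^ 2 = r := by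
    rw [← Real.exp_nat_mul, Nat.cast_two, mul_div_cancel₀ _ two_ne_zero, Real.exp_log hr]
  rw [Real.tanh_eq, Real.exp_neg]
  generalize Real.exp (Real.log r / 2) = u at hu ⊢
  have hu0 : u ≠ 0 := by rintro rfl; simp at hu; linarith
  subst hu
  field_simp

lemma tanhQuarter_nonneg {x : EReal} (hx : 0 ≤ x) : 0 ≤ tanhQuarter x := by
  unfold tanhQuarter
  split_ifs
  · exact zero_le_one
  · rw [← Real.tanh_zero]
    exact Real.tanh_le_tanh (by have := EReal.toReal_nonneg hx; positivity)

lemma tanhQuarter_mono {x y : EReal} (hx : 0 ≤ x) (hxy : x ≤ y) :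
    tanhQuarter x ≤ tanhQuarter y := by
  unfold tanhQuarter
  split_ifs with hxt hyt hyt'
  · exact le_rfl
  · exact absurd (top_le_iff.1 (hxt ▸ hxy)) hyt
  · exact (Real.tanh_lt_one _).le
  · exact Real.tanh_le_tanh (by
      gcongr; exact EReal.toReal_le_toReal hxy (ne_bot_of_le_ne_bot EReal.zero_ne_bot hx) hyt')

lemma sub_le_mul_tanh_log_div_four {l₁ l₂ t p q : ℝ} (hl₁ : 1 ≤ l₁) (hl₂ : 1 ≤ l₂) (ht : 0 ≤ t)
    (h₁ : p ≤ l₁ * q) (h₂ : t - q ≤ l₂ * (t - p)) :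
    p - q ≤ t * Real.tanh (Real.log (l₁ * l₂) / 4) := by
  have hl : 1 ≤ l₁ * l₂ := one_le_mul_of_one_le_of_one_le hl₁ hl₂
  set r := √(l₁ * l₂)
  have hr : r ^ 2 = l₁ * l₂ := Real.sq_sqrt (by linarith)
  have hr1 : 1 ≤ r := Real.one_le_sqrt.2 hl
  rw [show Real.log (l₁ * l₂) / 4 = Real.log r / 2 by rw [Real.log_sqrt (by linarith)]; ring,
    Real.tanh_log_div_two (by linarith), mul_div_assoc', le_div_iff₀ (by linarith)]
  have hamgm : 2 * r ≤ l₁ + l₂ := by nlinarith [sq_nonneg (l₁ - l₂)]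
  -- `(r² - 1)(p - q) ≤ (l₁ - 1)(l₂ - 1) t ≤ (r - 1)² t`, the second step by AM–GM
  have key : (r ^ 2 - 1) * (p - q) ≤ (r - 1) ^ 2 * t := by
    have := mul_nonneg (sub_nonneg.2 hamgm) ht
    rw [hr]
    nlinarith [mul_nonneg (sub_nonneg.2 hl₂) (sub_nonneg.2 h₁),
      mul_nonneg (sub_nonneg.2 hl₁) (sub_nonneg.2 h₂)]
  rcases hr1.eq_or_lt with h | h
  · have : l₁ = 1 := by nlinarith
    subst this
    rw [← h]
    linarith
  · nlinarith

lemma zero_mem_of_inter_neg_eq {G : Type*} [Zero G] [InvolutiveNeg G] {M : Set G}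
    (hM : M ∩ -M = {0}) : (0 : G) ∈ M :=
  (hM.symm ▸ rfl : (0 : G) ∈ M ∩ -M).1

section

variable {W : Type*} [NormedAddCommGroup W] [InnerProductSpace ℝ W]

section Cones

variable {S M : Set W}

lemma isClosed_dualConeSet (S : Set W) : IsClosed (dualConeSet S) := by
  simp only [dualConeSet, ofPred_forall]
  exact isClosed_biInter fun c _ => isClosed_le continuous_const (by fun_prop)

lemma convex_dualConeSet (S : Set W) : Convex ℝ (dualConeSet S) := by
  intro x hx y hy a b ha hb _ c hc
  rw [inner_add_left, real_inner_smul_left, real_inner_smul_left]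
  exact add_nonneg (mul_nonneg ha (hx c hc)) (mul_nonneg hb (hy c hc))

lemma zero_mem_dualConeSet (S : Set W) : (0 : W) ∈ dualConeSet S := fun c _ => by simp

lemma smul_mem_dualConeSet {x : W} (hx : x ∈ dualConeSet S) {r : ℝ} (hr : 0 ≤ r) :
    r • x ∈ dualConeSet S := fun c hc => by
  rw [real_inner_smul_left]
  exact mul_nonneg hr (hx c hc)

lemma mem_coneOfSet_of_mem {E : W} (hE : E ∈ M) : E ∈ coneOfSet M :=
  ⟨1, zero_le_one, E, hE, (one_smul ℝ E).symm⟩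

lemma smul_mem_coneOfSet {x : W} (hx : x ∈ coneOfSet M) {r : ℝ} (hr : 0 ≤ r) :
    r • x ∈ coneOfSet M := by
  obtain ⟨l, hl, E, hE, rfl⟩ := hx
  exact ⟨r * l, mul_nonneg hr hl, E, hE, smul_smul r l E⟩

lemma add_mem_coneOfSet (hMconv : Convex ℝ M) {x y : W} (hx : x ∈ coneOfSet M)
    (hy : y ∈ coneOfSet M) : x + y ∈ coneOfSet M := by
  obtain ⟨l, hl, E, hE, rfl⟩ := hx
  obtain ⟨m, hm, F, hF, rfl⟩ := hy
  rcases (add_nonneg hl hm).eq_or_lt with h | h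
  · obtain ⟨rfl, rfl⟩ : l = 0 ∧ m = 0 := ⟨by linarith, by linarith⟩
    exact ⟨0, le_rfl, E, hE, by simp⟩
  · refine ⟨l + m, h.le, (l / (l + m)) • E + (m / (l + m)) • F,
      hMconv hE hF (by positivity) (by positivity) (by field_simp), ?_⟩
    rw [smul_add, smul_smul, smul_smul, mul_div_cancel₀ _ h.ne', mul_div_cancel₀ _ h.ne']

def coneOfSet.toProperCone (hMconv : Convex ℝ M) (hM : M.Nonempty)
    (hK : IsClosed (coneOfSet M)) : ProperCone ℝ W where
  carrier := coneOfSet M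
  add_mem' := add_mem_coneOfSet hMconv
  zero_mem' := by
    obtain ⟨E, hE⟩ := hM
    exact ⟨0, le_rfl, E, hE, (zero_smul ℝ E).symm⟩
  smul_mem' c _ hx := smul_mem_coneOfSet hx c.2
  isClosed' := hK

lemma mem_coneOfSet_of_forall_inner_nonneg [CompleteSpace W] (hMconv : Convex ℝ M)
    (hM : M.Nonempty) (hK : IsClosed (coneOfSet M)) {y : W}
    (hy : ∀ c ∈ dualConeSet (coneOfSet M), 0 ≤ ⟪y, c⟫) : y ∈ coneOfSet M := by
  by_contra hyK
  obtain ⟨w, hw, hyw⟩ := (coneOfSet.toProperCone hMconv hM hK).hyperplane_separation' hyK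
  refine hyw.not_ge (hy w fun x hx => ?_)
  rw [real_inner_comm]
  exact hw x hx

lemma abs_inner_smul_le_of_forall_inner_sub_lt {S : Set W} {e w : W} {δ N u : ℝ} (hδ : 0 < δ)
    (hpos : ∀ c ∈ dualConeSet S, δ * ‖c‖ ≤ ⟪e, c⟫) (hN : 0 ≤ N) (hu : 0 < u)
    (h : ∀ a ∈ dualConeSet S, ∀ b ∈ dualConeSet S, ⟪e, a⟫ + ⟪e, b⟫ ≤ N → ⟪w, a - b⟫ < u)
    {c : W} (hc : c ∈ dualConeSet S) : |⟪(N / u) • w, c⟫| ≤ ⟪e, c⟫ := by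
  rcases eq_or_ne c 0 with rfl | hc0
  · simp
  have hs : 0 < ⟪e, c⟫ :=
    (by have := norm_pos_iff.2 hc0; positivity : 0 < δ * ‖c‖).trans_le (hpos c hc)
  have ha := smul_mem_dualConeSet hc (div_nonneg hN hs.le)
  have hea : ⟪e, (N / ⟪e, c⟫) • c⟫ = N := by
    rw [real_inner_smul_right, div_mul_cancel₀ _ hs.ne']
  have h₁ := h _ ha 0 (zero_mem_dualConeSet S) (by rw [hea, inner_zero_right, add_zero])
  have h₂ := h 0 (zero_mem_dualConeSet S) _ ha (by rw [hea, inner_zero_right, zero_add])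
  rw [sub_zero, real_inner_smul_right, div_mul_eq_mul_div, div_lt_iff₀ hs] at h₁
  rw [zero_sub, inner_neg_right, real_inner_smul_right, ← mul_neg, div_mul_eq_mul_div,
    div_lt_iff₀ hs] at h₂
  rw [real_inner_smul_left, abs_le, div_mul_eq_mul_div, le_div_iff₀ hu, div_le_iff₀ hu]
  constructor <;> linarith

end Cones

section Hilbert

variable {S : Set W} {e E x y : W} {t : ℝ}

lemma exists_supRatio_eq_coe (ht : 0 < t) (hE : E ∈ S) (hEe : e - E ∈ S) (hx : ⟪e, x⟫ = t)
    (hy : ⟪e, y⟫ = t) (hne : supRatio (dualConeSet S) x y ≠ ⊤) :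
    ∃ l : ℝ, 1 ≤ l ∧ l • y - x ∈ dualConeSet S ∧ supRatio (dualConeSet S) x y = l := by
  set L := {l : ℝ | l • y - x ∈ dualConeSet S}
  have hL : ∀ l ∈ L, 1 ≤ l := fun l hl => by
    have := add_nonneg (hl E hE) (hl _ hEe)
    rw [← inner_add_right, add_sub_cancel, inner_sub_left, real_inner_smul_left,
      real_inner_comm, hy, real_inner_comm, hx] at this
    nlinarith
  have hLne : L.Nonempty := by
    rw [nonempty_iff_ne_empty]
    intro hL0
    apply hne
    change sInf ((fun l : ℝ => (l : EReal)) '' L) = ⊤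
    rw [hL0, image_empty, sInf_empty]
  have hmem : sInf L ∈ L :=
    ((isClosed_dualConeSet S).preimage (by fun_prop)).csInf_mem hLne ⟨1, hL⟩
  refine ⟨sInf L, hL _ hmem, hmem, le_antisymm (sInf_le ⟨_, hmem, rfl⟩) (le_sInf ?_)⟩
  rintro _ ⟨l, hl, rfl⟩
  exact EReal.coe_le_coe_iff.2 (csInf_le ⟨1, hL⟩ hl)

lemma exists_hilbertDist_eq_log (ht : 0 < t) (hE : E ∈ S) (hEe : e - E ∈ S) (hx : ⟪e, x⟫ = t)
    (hy : ⟪e, y⟫ = t) (hne : hilbertDist (dualConeSet S) x y ≠ ⊤) :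
    ∃ l₁ l₂ : ℝ, 1 ≤ l₁ ∧ 1 ≤ l₂ ∧ l₁ • y - x ∈ dualConeSet S ∧ l₂ • x - y ∈ dualConeSet S ∧
      hilbertDist (dualConeSet S) x y = (Real.log (l₁ * l₂) : ℝ) := by
  unfold hilbertDist at hne ⊢
  split_ifs at hne ⊢ with h
  · exact absurd rfl hne
  rw [not_or] at h
  obtain ⟨l₁, hl₁, hmem₁, heq₁⟩ := exists_supRatio_eq_coe ht hE hEe hx hy h.1
  obtain ⟨l₂, hl₂, hmem₂, heq₂⟩ := exists_supRatio_eq_coe ht hE hEe hy hx h.2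
  exact ⟨l₁, l₂, hl₁, hl₂, hmem₁, hmem₂, by rw [heq₁, heq₂]; rfl⟩

lemma hilbertDist_nonneg (ht : 0 < t) (hE : E ∈ S) (hEe : e - E ∈ S) (hx : ⟪e, x⟫ = t)
    (hy : ⟪e, y⟫ = t) : 0 ≤ hilbertDist (dualConeSet S) x y := by
  by_cases hne : hilbertDist (dualConeSet S) x y = ⊤
  · simp [hne]
  obtain ⟨l₁, l₂, hl₁, hl₂, -, -, heq⟩ := exists_hilbertDist_eq_log ht hE hEe hx hy hne
  rw [heq]
  exact EReal.coe_nonneg.2 (Real.log_nonneg (one_le_mul_of_one_le_of_one_le hl₁ hl₂))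

lemma inner_sub_le_mul_tanhQuarter_hilbertDist (ht : 0 < t) (hE : E ∈ S) (hEe : e - E ∈ S)
    (hxS : x ∈ dualConeSet S) (hyS : y ∈ dualConeSet S) (hx : ⟪e, x⟫ = t) (hy : ⟪e, y⟫ = t) :
    ⟪E, x - y⟫ ≤ t * tanhQuarter (hilbertDist (dualConeSet S) x y) := by
  have hxe : ⟪x, e⟫ = t := by rw [real_inner_comm, hx]
  have hye : ⟪y, e⟫ = t := by rw [real_inner_comm, hy]
  rw [inner_sub_right, real_inner_comm x E, real_inner_comm y E]
  by_cases hne : hilbertDist (dualConeSet S) x y = ⊤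
  · have hp := hxS _ hEe
    have hq := hyS E hE
    rw [inner_sub_right, hxe] at hp
    rw [hne, tanhQuarter, if_pos rfl, mul_one]
    linarith
  obtain ⟨l₁, l₂, hl₁, hl₂, hmem₁, hmem₂, heq⟩ := exists_hilbertDist_eq_log ht hE hEe hx hy hne
  rw [heq, tanhQuarter, if_neg (EReal.coe_ne_top _), EReal.toReal_coe]
  have h₁ := hmem₁ E hE
  have h₂ := hmem₂ _ hEe
  simp only [inner_sub_left, inner_sub_right, real_inner_smul_left, hxe, hye] at h₁ h₂
  exact sub_le_mul_tanh_log_div_four hl₁ hl₂ ht.le (by linarith) (by linarith)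

end Hilbert

section InteriorPoint

variable {M : Set W} {e : W}

lemma exists_half_smul_add_mem (hMconv : Convex ℝ M) (hMint : (interior M).Nonempty)
    (hMe : ∀ E ∈ M, e - E ∈ M) : ∃ δ > 0, ∀ x : W, ‖x‖ ≤ δ → (2 : ℝ)⁻¹ • e + x ∈ M := by
  obtain ⟨x₀, hx₀⟩ := hMint
  obtain ⟨r, hr, hball⟩ := Metric.mem_nhds_iff.1 (mem_interior_iff_mem_nhds.1 hx₀)
  have hmem : ∀ y : W, ‖y‖ < r → x₀ + y ∈ M := fun y hy =>
    hball (by rwa [Metric.mem_ball, dist_eq_norm, add_sub_cancel_left])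
  -- `e/2 + x` is the midpoint of `x₀ + x` and `e - (x₀ - x)`, both in `M`
  refine ⟨r / 2, by positivity, fun x hx => ?_⟩
  have h₁ := hmem x (by linarith)
  have h₂ := hMe _ (hmem (-x) (by rw [norm_neg]; linarith))
  convert hMconv h₁ h₂ (by norm_num : (0 : ℝ) ≤ 2⁻¹) (by norm_num : (0 : ℝ) ≤ 2⁻¹) (by norm_num)
    using 1
  module

lemma exists_pos_mul_norm_le_inner (hMconv : Convex ℝ M) (hMint : (interior M).Nonempty)
    (hMe : ∀ E ∈ M, e - E ∈ M) :
    ∃ δ > 0, ∀ c ∈ dualConeSet (coneOfSet M), δ * ‖c‖ ≤ ⟪e, c⟫ := by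
  obtain ⟨δ, hδ, hball⟩ := exists_half_smul_add_mem hMconv hMint hMe
  refine ⟨2 * δ, by positivity, fun c hc => ?_⟩
  rcases eq_or_ne c 0 with rfl | hc0
  · simp
  have hc' : 0 < ‖c‖ := norm_pos_iff.2 hc0
  have hE := hc _ (mem_coneOfSet_of_mem (hball (-((δ / ‖c‖) • c)) (by
    rw [norm_neg, norm_smul, Real.norm_of_nonneg (by positivity), div_mul_cancel₀ _ hc'.ne'])))
  rw [inner_add_right, inner_neg_right, real_inner_smul_right, real_inner_smul_right,
    real_inner_self_eq_norm_sq, real_inner_comm] at hE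
  have : δ / ‖c‖ * ‖c‖ ^ 2 = δ * ‖c‖ := by field_simp
  linarith

lemma eq_zero_of_inner_le_zero (hMconv : Convex ℝ M) (hMint : (interior M).Nonempty)
    (hMe : ∀ E ∈ M, e - E ∈ M) {c : W} (hc : c ∈ dualConeSet (coneOfSet M)) (h : ⟪e, c⟫ ≤ 0) :
    c = 0 := by
  obtain ⟨δ, hδ, hpos⟩ := exists_pos_mul_norm_le_inner hMconv hMint hMe
  have := hpos c hc
  exact norm_eq_zero.1 (le_antisymm (by nlinarith [norm_nonneg c]) (norm_nonneg c))

lemma isClosed_coneOfSet (hMcl : IsClosed M) (hMconv : Convex ℝ M)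
    (hMint : (interior M).Nonempty) (hMe : ∀ E ∈ M, e - E ∈ M) (hMt : M = mTilde M e) :
    IsClosed (coneOfSet M) := by
  obtain ⟨δ, hδ, hball⟩ := exists_half_smul_add_mem hMconv hMint hMe
  set f : W → W := fun x => (δ / (δ + ‖x‖)) • x
  have hf : ∀ x, ‖f x‖ ≤ δ := fun x => by
    rw [norm_smul, Real.norm_of_nonneg (by positivity), div_mul_eq_mul_div,
      div_le_iff₀ (by positivity)]
    nlinarith [norm_nonneg x]
  -- `x ∈ C_M` iff its rescaling `f x`, of norm at most `δ`, lies in `M̃ = M`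
  have hKf : coneOfSet M = f ⁻¹' M := by
    ext x
    constructor
    · intro hx
      rw [mem_preimage, hMt]
      refine ⟨smul_mem_coneOfSet hx (by positivity), ?_⟩
      rw [show e - f x = (2 : ℝ) • ((2 : ℝ)⁻¹ • e + -((2 : ℝ)⁻¹ • f x)) by module]
      refine smul_mem_coneOfSet (mem_coneOfSet_of_mem (hball _ ?_)) zero_le_two
      rw [norm_neg, norm_smul, Real.norm_of_nonneg (by norm_num)]
      linarith [hf x]
    · intro hx
      convert smul_mem_coneOfSet (mem_coneOfSet_of_mem (M := M) hx)
        (r := (δ + ‖x‖) / δ) (by positivity) using 1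
      simp only [f, smul_smul, div_mul_div_cancel₀ hδ.ne', div_self (by positivity : δ + ‖x‖ ≠ 0),
        one_smul]
  rw [hKf]
  exact hMcl.preimage ((continuous_const.div (by fun_prop) fun x => by positivity).smul
    continuous_id)

end InteriorPoint

section DistNorm

variable {M : Set W} {e : W}

lemma le_distNorm (hM : IsCompact M) {E : W} (hE : E ∈ M) (v : W) :
    ⟪2 • E - e, v⟫ ≤ distNorm M e v := by
  refine le_csSup ?_ ⟨E, hE, rfl⟩
  refine (hM.bddAbove_image (f := fun E => ⟪2 • E - e, v⟫) (by fun_prop)).mono ?_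
  rintro _ ⟨E, hE, rfl⟩
  exact ⟨E, hE, rfl⟩

lemma distNorm_le (hM : M.Nonempty) {v : W} {r : ℝ} (h : ∀ E ∈ M, ⟪2 • E - e, v⟫ ≤ r) :
    distNorm M e v ≤ r := by
  obtain ⟨E, hE⟩ := hM
  refine csSup_le ⟨_, E, hE, rfl⟩ ?_
  rintro _ ⟨E, hE, rfl⟩
  exact h E hE

lemma distNorm_zero (hM : M.Nonempty) : distNorm M e 0 = 0 := by
  obtain ⟨E, hE⟩ := hM
  have : {r : ℝ | ∃ E ∈ M, r = ⟪2 • E - e, (0 : W)⟫} = {0} := by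
    ext r
    simp only [inner_zero_right, mem_ofPred_eq, mem_singleton_iff]
    exact ⟨fun ⟨_, _, h⟩ => h, fun h => ⟨E, hE, h⟩⟩
  rw [distNorm, this, csSup_singleton]

lemma distNorm_pos (hM : IsCompact M) (hMconv : Convex ℝ M) (hMint : (interior M).Nonempty)
    (hMe : ∀ E ∈ M, e - E ∈ M) {v : W} (hv : v ≠ 0) : 0 < distNorm M e v := by
  obtain ⟨δ, hδ, hball⟩ := exists_half_smul_add_mem hMconv hMint hMe
  have hv' : 0 < ‖v‖ := norm_pos_iff.2 hv
  have hE := le_distNorm (e := e) hM (hball ((δ / ‖v‖) • v) (by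
    rw [norm_smul, Real.norm_of_nonneg (by positivity), div_mul_cancel₀ _ hv'.ne'])) v
  have h2E : 2 • ((2 : ℝ)⁻¹ • e + (δ / ‖v‖) • v) - e = (2 * (δ / ‖v‖)) • v := by module
  rw [h2E, real_inner_smul_left, real_inner_self_eq_norm_sq] at hE
  have : 2 * (δ / ‖v‖) * ‖v‖ ^ 2 = 2 * δ * ‖v‖ := by field_simp
  nlinarith

end DistNorm

section FiniteDimensional

variable [FiniteDimensional ℝ W] {M : Set W} {e : W}

lemma exists_ray_subset_of_not_isBounded (hMcl : IsClosed M) (hMconv : Convex ℝ M)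
    (h0 : (0 : W) ∈ M) (hM : ¬Bornology.IsBounded M) :
    ∃ a : W, a ≠ 0 ∧ ∀ t : ℝ, 0 ≤ t → t • a ∈ M := by
  simp only [isBounded_iff_forall_norm_le, not_exists, not_forall, not_le] at hM
  choose y hyM hy using fun n : ℕ => hM n
  have hy0 : ∀ n, 0 < ‖y n‖ := fun n => (Nat.cast_nonneg n).trans_lt (hy n)
  obtain ⟨a, ha, φ, hφ, hlim⟩ := (isCompact_sphere (0 : W) 1).tendsto_subseq
    (x := fun n => ‖y n‖⁻¹ • y n) fun n => by simp [norm_smul, (hy0 n).ne']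
  refine ⟨a, by rintro rfl; simp at ha, fun t ht => ?_⟩
  have hnorm : Tendsto (fun n => ‖y (φ n)‖) atTop atTop :=
    tendsto_atTop_mono (fun n => (hy (φ n)).le)
      (tendsto_natCast_atTop_atTop.comp hφ.tendsto_atTop)
  refine hMcl.mem_of_tendsto (hlim.const_smul t) ((hnorm.eventually_ge_atTop t).mono fun n hn => ?_)
  simp only [Function.comp_apply, smul_smul]
  exact hMconv.smul_mem_of_zero_mem h0 (hyM _)
    ⟨by positivity, by rwa [mul_inv_le_iff₀ (hy0 _), one_mul]⟩

lemma isCompact_of_sub_mem (hMcl : IsClosed M) (hMconv : Convex ℝ M) (hMpt : M ∩ -M = {0})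
    (hMe : ∀ E ∈ M, e - E ∈ M) : IsCompact M := by
  have h0 := zero_mem_of_inter_neg_eq hMpt
  refine Metric.isCompact_of_isClosed_isBounded hMcl ?_
  by_contra hM
  obtain ⟨a, ha0, ha⟩ := exists_ray_subset_of_not_isBounded hMcl hMconv h0 hM
  have hlim : Tendsto (fun t : ℝ => t⁻¹ • e - a) atTop (𝓝 (-a)) := by
    simpa using ((tendsto_inv_atTop_zero (𝕜 := ℝ)).smul_const e).sub_const a
  have hna : -a ∈ M := hMcl.mem_of_tendsto hlim ((eventually_ge_atTop 1).mono fun t ht => by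
    have := hMconv.smul_mem_of_zero_mem h0 (hMe _ (ha t (by linarith)))
      ⟨inv_nonneg.2 (by linarith), inv_le_one_of_one_le₀ ht⟩
    rwa [smul_sub, smul_smul, inv_mul_cancel₀ (by linarith), one_smul] at this)
  have : a ∈ M ∩ -M := ⟨by simpa using ha 1 zero_le_one, by simpa using hna⟩
  rw [hMpt] at this
  exact ha0 this

lemma isCompact_setOf_inner_add_le {C : Set W} (hC : IsClosed C) {δ : ℝ} (hδ : 0 < δ)
    (hpos : ∀ c ∈ C, δ * ‖c‖ ≤ ⟪e, c⟫) (N : ℝ) :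
    IsCompact (C ×ˢ C ∩ {p : W × W | ⟪e, p.1⟫ + ⟪e, p.2⟫ ≤ N}) := by
  refine Metric.isCompact_of_isClosed_isBounded
    ((hC.prod hC).inter (isClosed_le (by fun_prop) continuous_const))
    (isBounded_iff_forall_norm_le.2 ⟨N / δ, ?_⟩)
  rintro p ⟨⟨h₁, h₂⟩, hN : ⟪e, p.1⟫ + ⟪e, p.2⟫ ≤ N⟩
  have := hpos _ h₁
  have := hpos _ h₂
  rw [Prod.norm_def, max_le_iff, le_div_iff₀ hδ, le_div_iff₀ hδ]
  constructor <;> nlinarith [norm_nonneg p.1, norm_nonneg p.2]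

end FiniteDimensional

section Decomposition

variable [FiniteDimensional ℝ W] {M : Set W} {e : W}

lemma inner_le_distNorm_of_abs_inner_le (hM : IsCompact M) (hMconv : Convex ℝ M)
    (hMne : M.Nonempty) (hK : IsClosed (coneOfSet M)) (hMt : M = mTilde M e) {g : W}
    (hg : ∀ c ∈ dualConeSet (coneOfSet M), |⟪g, c⟫| ≤ ⟪e, c⟫) (v : W) :
    ⟪g, v⟫ ≤ distNorm M e v := by
  have hplus : e + g ∈ coneOfSet M :=
    mem_coneOfSet_of_forall_inner_nonneg hMconv hMne hK fun c hc => by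
      rw [inner_add_left]
      linarith [neg_abs_le ⟪g, c⟫, hg c hc]
  have hminus : e - g ∈ coneOfSet M :=
    mem_coneOfSet_of_forall_inner_nonneg hMconv hMne hK fun c hc => by
      rw [inner_sub_left]
      linarith [le_abs_self ⟪g, c⟫, hg c hc]
  have hE : (2 : ℝ)⁻¹ • (e + g) ∈ M := by
    rw [hMt]
    refine ⟨smul_mem_coneOfSet hplus (by norm_num), ?_⟩
    rw [show e - (2 : ℝ)⁻¹ • (e + g) = (2 : ℝ)⁻¹ • (e - g) by module]
    exact smul_mem_coneOfSet hminus (by norm_num)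
  have h2E : 2 • ((2 : ℝ)⁻¹ • (e + g)) - e = g := by module
  simpa only [h2E] using le_distNorm (e := e) hM hE v

theorem exists_sub_eq_inner_add_inner_le_distNorm (hMcl : IsClosed M) (hMconv : Convex ℝ M)
    (hMint : (interior M).Nonempty) (hMpt : M ∩ -M = {0}) (hMe : ∀ E ∈ M, e - E ∈ M)
    (hMt : M = mTilde M e) (v : W) :
    ∃ a ∈ dualConeSet (coneOfSet M), ∃ b ∈ dualConeSet (coneOfSet M),
      v = a - b ∧ ⟪e, a⟫ + ⟪e, b⟫ ≤ distNorm M e v := by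
  have hM := isCompact_of_sub_mem hMcl hMconv hMpt hMe
  have hMne : M.Nonempty := ⟨0, zero_mem_of_inter_neg_eq hMpt⟩
  set C := dualConeSet (coneOfSet M)
  set N := distNorm M e v
  rcases eq_or_ne v 0 with rfl | hv
  · exact ⟨0, zero_mem_dualConeSet _, 0, zero_mem_dualConeSet _, by simp,
      by simp [N, distNorm_zero hMne]⟩
  have hN : 0 < N := distNorm_pos hM hMconv hMint hMe hv
  obtain ⟨δ, hδ, hpos⟩ := exists_pos_mul_norm_le_inner hMconv hMint hMe
  set Q := C ×ˢ C ∩ {p : W × W | ⟪e, p.1⟫ + ⟪e, p.2⟫ ≤ N}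
  by_contra! hvQ
  have hvD : v ∉ (fun p : W × W => p.1 - p.2) '' Q := by
    rintro ⟨p, ⟨⟨ha, hb⟩, hp⟩, rfl⟩
    exact (hvQ p.1 ha p.2 hb rfl).not_ge hp
  have hD : Convex ℝ ((fun p : W × W => p.1 - p.2) '' Q) :=
    (((convex_dualConeSet _).prod (convex_dualConeSet _)).inter (convex_halfSpace_le
      ((innerₗ W e).comp (LinearMap.fst ℝ W W) + (innerₗ W e).comp (LinearMap.snd ℝ W W)).isLinear
      N)).is_linear_image (LinearMap.fst ℝ W W - LinearMap.snd ℝ W W).isLinear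
  obtain ⟨f, u, hfD, hfv⟩ := geometric_hahn_banach_closed_point hD
    ((isCompact_setOf_inner_add_le (isClosed_dualConeSet _) hδ hpos N).image
      (by fun_prop)).isClosed hvD
  set w := (InnerProductSpace.toDual ℝ W).symm f
  have hw : ∀ z, ⟪w, z⟫ = f z := fun z => InnerProductSpace.toDual_symm_apply
  have hfQ : ∀ a ∈ C, ∀ b ∈ C, ⟪e, a⟫ + ⟪e, b⟫ ≤ N → ⟪w, a - b⟫ < u :=
    fun a ha b hb hab => (hw _).symm ▸ hfD _ ⟨(a, b), ⟨⟨ha, hb⟩, hab⟩, rfl⟩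
  have hu : 0 < u := by
    simpa [hw] using
      hfQ 0 (zero_mem_dualConeSet _) 0 (zero_mem_dualConeSet _) (by simpa using hN.le)
  have hle := inner_le_distNorm_of_abs_inner_le hM hMconv hMne
    (isClosed_coneOfSet hMcl hMconv hMint hMe hMt) hMt
    (fun c hc => abs_inner_smul_le_of_forall_inner_sub_lt hδ hpos hN.le hu hfQ hc) v
  rw [real_inner_smul_left, hw, div_mul_eq_mul_div, div_le_iff₀ hu] at hle
  nlinarith

end Decomposition

section Contraction

variable {W' : Type*} [NormedAddCommGroup W'] [InnerProductSpace ℝ W']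
variable {M : Set W} {e : W} {M' : Set W'} {e' : W'}

lemma map_mem_dualConeSet_of_mapsTo_base {S : Set W} {S' : Set W'} {T : W →ₗ[ℝ] W'}
    (hT : ∀ b ∈ dualConeSet S ∩ {v | ⟪e, v⟫ = 1}, T b ∈ dualConeSet S' ∩ {v | ⟪e', v⟫ = 1})
    {a : W} (ha : a ∈ dualConeSet S) (ht : 0 < ⟪e, a⟫) :
    T a ∈ dualConeSet S' ∧ ⟪e', T a⟫ = ⟪e, a⟫ := by
  obtain ⟨h₁, h₂ : ⟪e', T (⟪e, a⟫⁻¹ • a)⟫ = 1⟩ :=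
    hT _ ⟨smul_mem_dualConeSet ha (inv_nonneg.2 ht.le), by
      rw [mem_ofPred_eq, real_inner_smul_right, inv_mul_cancel₀ ht.ne']⟩
  rw [map_smul] at h₁ h₂
  refine ⟨by simpa [smul_smul, ht.ne'] using smul_mem_dualConeSet h₁ ht.le, ?_⟩
  rw [real_inner_smul_right, inv_mul_eq_one₀ ht.ne'] at h₂
  exact h₂.symm

theorem distNorm_map_le_of_adjoint [FiniteDimensional ℝ W] [FiniteDimensional ℝ W']
    (hM : IsCompact M) (hM' : M'.Nonempty) (T : W →ₗ[ℝ] W')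
    (hTM : ∀ E ∈ M', LinearMap.adjoint T E ∈ M) (hTe : LinearMap.adjoint T e' = e) (v : W) :
    distNorm M' e' (T v) ≤ distNorm M e v :=
  distNorm_le hM' fun E hE => by
    calc ⟪2 • E - e', T v⟫ = ⟪2 • LinearMap.adjoint T E - e, v⟫ := by
          rw [← LinearMap.adjoint_inner_left, map_sub, map_nsmul, hTe]
      _ ≤ distNorm M e v := le_distNorm hM (hTM E hE) v

theorem distNorm_map_le_mul_tanhQuarter [FiniteDimensional ℝ W] (hMcl : IsClosed M)
    (hMconv : Convex ℝ M) (hMint : (interior M).Nonempty) (hMpt : M ∩ -M = {0})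
    (hMe : ∀ E ∈ M, e - E ∈ M) (hMt : M = mTilde M e) (hM' : M'.Nonempty)
    (hM'e : ∀ E ∈ M', e' - E ∈ M') (T : W →ₗ[ℝ] W')
    (hT : ∀ b ∈ dualConeSet (coneOfSet M) ∩ {v | ⟪e, v⟫ = 1},
      T b ∈ dualConeSet (coneOfSet M') ∩ {v | ⟪e', v⟫ = 1})
    {v : W} (hv : ⟪e, v⟫ = 0) :
    distNorm M' e' (T v) ≤ distNorm M e v *
      tanhQuarter (projDiam (dualConeSet (coneOfSet M)) (dualConeSet (coneOfSet M')) T) := by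
  set C' := dualConeSet (coneOfSet M')
  set Δ := projDiam (dualConeSet (coneOfSet M)) C' T
  rcases eq_or_ne v 0 with rfl | hv0
  · rw [map_zero, distNorm_zero hM', distNorm_zero ⟨0, zero_mem_of_inter_neg_eq hMpt⟩, zero_mul]
  obtain ⟨a, ha, b, hb, rfl, hN⟩ :=
    exists_sub_eq_inner_add_inner_le_distNorm hMcl hMconv hMint hMpt hMe hMt v
  have hab : ⟪e, a⟫ = ⟪e, b⟫ := by rwa [inner_sub_right, sub_eq_zero] at hv
  set t := ⟪e, a⟫
  have ht : 0 < t := by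
    by_contra! h
    refine hv0 ?_
    rw [eq_zero_of_inner_le_zero hMconv hMint hMe ha h,
      eq_zero_of_inner_le_zero hMconv hMint hMe hb (hab ▸ h), sub_zero]
  obtain ⟨hTa, hTat⟩ := map_mem_dualConeSet_of_mapsTo_base hT ha ht
  obtain ⟨hTb, hTbt⟩ := map_mem_dualConeSet_of_mapsTo_base hT hb (hab ▸ ht)
  rw [← hab] at hTbt
  have hhΔ : hilbertDist C' (T a) (T b) ≤ Δ :=
    le_iSup₂_of_le a ⟨ha, by rintro rfl; simp [t] at ht⟩
      (le_iSup₂_of_le b ⟨hb, by rintro rfl; simp [hab] at ht⟩ le_rfl)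
  refine distNorm_le hM' fun E hE => ?_
  have hEK := mem_coneOfSet_of_mem hE
  have hEeK := mem_coneOfSet_of_mem (hM'e E hE)
  have hh0 := hilbertDist_nonneg ht hEK hEeK hTat hTbt
  calc ⟪2 • E - e', T (a - b)⟫ = 2 * ⟪E, T a - T b⟫ := by
        rw [map_sub, inner_sub_left, inner_sub_right e', hTat, hTbt, sub_self, sub_zero,
          two_nsmul, inner_add_left]
        ring
    _ ≤ 2 * (t * tanhQuarter (hilbertDist C' (T a) (T b))) := by
        gcongr
        exact inner_sub_le_mul_tanhQuarter_hilbertDist ht hEK hEeK hTa hTb hTat hTbt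
    _ ≤ 2 * (t * tanhQuarter Δ) := by gcongr; exact tanhQuarter_mono hh0 hhΔ
    _ ≤ distNorm M e (a - b) * tanhQuarter Δ := by
        nlinarith [tanhQuarter_nonneg (hh0.trans hhΔ)]

end Contraction

end

theorem distNorm_contraction_general
    {V : Type*} [NormedAddCommGroup V] [InnerProductSpace ℝ V] [FiniteDimensional ℝ V]
    {V' : Type*} [NormedAddCommGroup V'] [InnerProductSpace ℝ V'] [FiniteDimensional ℝ V']
    (e : V) (M : Set V)
    (hMcl : IsClosed M) (hMconv : Convex ℝ M) (hMint : (interior M).Nonempty)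
    (hMpt : M ∩ (-M) = {0}) (hMe : ∀ E ∈ M, e - E ∈ M)
    (e' : V') (M' : Set V')
    (hM'int : (interior M').Nonempty)
    (hM'e : ∀ E ∈ M', e' - E ∈ M')
    (C : Set V) (hCdef : C = dualConeSet (coneOfSet M))
    (C' : Set V') (hC'def : C' = dualConeSet (coneOfSet M'))
    (B : Set V) (hBdef : B = C ∩ {v : V | (inner ℝ e v : ℝ) = 1})
    (B' : Set V') (hB'def : B' = C' ∩ {v : V' | (inner ℝ e' v : ℝ) = 1})
    (T : V →ₗ[ℝ] V')
    (v₁ v₂ : V) (hv : (inner ℝ e v₁ : ℝ) = (inner ℝ e v₂ : ℝ)) :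
    ((∀ E ∈ M', LinearMap.adjoint T E ∈ M) → LinearMap.adjoint T e' = e →
      distNorm M' e' (T v₁ - T v₂) ≤ distNorm M e (v₁ - v₂)) ∧
    ((∀ b ∈ B, T b ∈ B') → M = mTilde M e →
      distNorm M' e' (T v₁ - T v₂) ≤ distNorm M e (v₁ - v₂) * tanhQuarter (projDiam C C' T)) := by
  subst hCdef hC'def hBdef hB'def
  have hM' : M'.Nonempty := hM'int.mono interior_subset
  rw [← map_sub]
  exact ⟨fun hTM hTe =>
      distNorm_map_le_of_adjoint (isCompact_of_sub_mem hMcl hMconv hMpt hMe) hM' T hTM hTe _,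
    fun hT hMt => distNorm_map_le_mul_tanhQuarter hMcl hMconv hMint hMpt hMe hMt hM' hM'e T hT
      (by rw [inner_sub_right, hv, sub_self])⟩

/-- **Distinguishability norm contraction.** -/
theorem distNorm_contraction
    {V : Type*} [NormedAddCommGroup V] [InnerProductSpace ℝ V] [FiniteDimensional ℝ V]
    {V' : Type*} [NormedAddCommGroup V'] [InnerProductSpace ℝ V'] [FiniteDimensional ℝ V']
    (e : V) (M : Set V)
    (hMcl : IsClosed M) (hMconv : Convex ℝ M) (hMint : (interior M).Nonempty)
    (hMpt : M ∩ (-M) = {0}) (hMe : ∀ E ∈ M, e - E ∈ M)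
    (e' : V') (M' : Set V')
    (hM'cl : IsClosed M') (hM'conv : Convex ℝ M') (hM'int : (interior M').Nonempty)
    (hM'pt : M' ∩ (-M') = {0}) (hM'e : ∀ E ∈ M', e' - E ∈ M')
    (C : Set V) (hCdef : C = dualConeSet (coneOfSet M))
    (C' : Set V') (hC'def : C' = dualConeSet (coneOfSet M'))
    (B : Set V) (hBdef : B = C ∩ {v : V | (inner ℝ e v : ℝ) = 1})
    (B' : Set V') (hB'def : B' = C' ∩ {v : V' | (inner ℝ e' v : ℝ) = 1})
    (T : V →ₗ[ℝ] V')
    (v₁ v₂ : V) (hv : (inner ℝ e v₁ : ℝ) = (inner ℝ e v₂ : ℝ)) :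
    ((∀ E ∈ M', LinearMap.adjoint T E ∈ M) → LinearMap.adjoint T e' = e →
      distNorm M' e' (T v₁ - T v₂) ≤ distNorm M e (v₁ - v₂)) ∧
    ((∀ b ∈ B, T b ∈ B') → M = mTilde M e →
      distNorm M' e' (T v₁ - T v₂) ≤ distNorm M e (v₁ - v₂) * tanhQuarter (projDiam C C' T)) :=
  distNorm_contraction_general e M hMcl hMconv hMint hMpt hMe e' M' hM'int hM'e C hCdef C' hC'def B
    hBdef B' hB'def T v₁ v₂ hv
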